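/- Let f : ℝⁿ → ℝ be differentiable and coercive with L-Lipschitz gradient, and let H : ℝⁿ → ℝ^{n×n} be a continuous map into the symmetric positive definite matrices. Fix α, σ ∈ (0,1) and x₀ ∈ ℝⁿ, and generate x_{k+1} = x_k + σ^{s_k} v_k, where v_k = −H(x_k)⁻¹ ∇f(x_k) and s_k is the smallest nonnegative integer s for which f(x_k + σˢ v_k) ≤ f(x_k) + α σˢ ⟨∇f(x_k), v_k⟩. Then there exists a constant c > 0 (depending only on α, σ, L, and spectral bounds of H on the sublevel set {x : f(x) ≤ f(x₀)}) such that for every k, f(x_k) − f(x_{k+1}) ≥ c ‖∇f(x_k)‖². -/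

import Mathlib

/-!
Along `v = -H(x)⁻¹ ∇f(x)` one has `-⟪∇f(x), v⟫ ≥ μ‖∇f(x)‖²` and `‖v‖ ≤ M‖∇f(x)‖`, with `μ > 0`
and `M` uniform over the compact sublevel set `{f ≤ f(x₀)}`, which contains every iterate
because Armijo steps decrease `f`. The descent lemma
`f(x + d) ≤ f(x) + ⟪∇f(x), d⟫ + L/2 ‖d‖²` then shows that every step `η ≤ τ := 2(1-α)μ/(LM² + 1)`
passes the Armijo test, so backtracking accepts a step `σ^s ≥ min(1, στ)`, and the Armijo
inequality itself gives `f(x_k) - f(x_{k+1}) ≥ α σ^s μ ‖∇f(x_k)‖²`.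
-/

open scoped RealInnerProductSpace NNReal
open Matrix

section Descent

variable {E : Type*} [NormedAddCommGroup E] [InnerProductSpace ℝ E] [CompleteSpace E]
  {f : E → ℝ} {f' : E → E} {L : ℝ≥0}

theorem HasGradientAt.hasDerivAt_comp_add_smul {g x d : E} {t : ℝ}
    (h : HasGradientAt f g (x + t • d)) :
    HasDerivAt (fun t : ℝ => f (x + t • d)) ⟪g, d⟫ t := by
  have hline : HasDerivAt (fun t : ℝ => x + t • d) d t := by
    simpa using ((hasDerivAt_id t).smul_const d).const_add x
  exact h.hasFDerivAt.comp_hasDerivAt t hline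

theorem le_add_inner_add_sq_of_lipschitzWith_gradient
    (hf : ∀ y, HasGradientAt f (f' y) y) (hlip : LipschitzWith L f') (x d : E) :
    f (x + d) ≤ f x + ⟪f' x, d⟫ + L / 2 * ‖d‖ ^ 2 := by
  set c := ⟪f' x, d⟫
  set b := L / 2 * ‖d‖ ^ 2
  have hderiv : ∀ t : ℝ, HasDerivAt (fun t : ℝ => f (x + t • d) - (t * c + t ^ 2 * b))
      (⟪f' (x + t • d), d⟫ - (c + 2 * t * b)) t := fun t => by
    have hpoly : HasDerivAt (fun t : ℝ => t * c + t ^ 2 * b) (c + 2 * t * b) t :=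
      (((hasDerivAt_id' t).mul_const c).fun_add
        ((hasDerivAt_pow 2 t).mul_const b)).congr_deriv (by push_cast; ring)
    exact (hf _).hasDerivAt_comp_add_smul.fun_sub hpoly
  have hderiv_nonpos : ∀ t ∈ interior (Set.Icc (0 : ℝ) 1),
      ⟪f' (x + t • d), d⟫ - (c + 2 * t * b) ≤ 0 := by
    intro t ht
    rw [interior_Icc] at ht
    calc ⟪f' (x + t • d), d⟫ - (c + 2 * t * b) = ⟪f' (x + t • d) - f' x, d⟫ - 2 * t * b := by
          rw [inner_sub_left]; ring
      _ ≤ ‖f' (x + t • d) - f' x‖ * ‖d‖ - 2 * t * b := by gcongr; exact real_inner_le_norm _ _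
      _ ≤ L * ‖(x + t • d) - x‖ * ‖d‖ - 2 * t * b := by gcongr; exact hlip.norm_sub_le _ _
      _ = 0 := by
          rw [add_sub_cancel_left, norm_smul, Real.norm_eq_abs, abs_of_pos ht.1]; ring
  have hanti := antitoneOn_of_hasDerivWithinAt_nonpos (convex_Icc (0 : ℝ) 1)
    (HasDerivAt.continuousOn fun t _ => hderiv t)
    (fun t _ => (hderiv t).hasDerivWithinAt) hderiv_nonpos
  have hends := hanti (Set.left_mem_Icc.2 zero_le_one) (Set.right_mem_Icc.2 zero_le_one) zero_le_one
  simp only [zero_smul, add_zero, one_smul, zero_mul, one_mul, one_pow, ne_eq,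
    OfNat.ofNat_ne_zero, not_false_eq_true, zero_pow] at hends
  linarith

end Descent

section Armijo

variable {E : Type*} [NormedAddCommGroup E] [InnerProductSpace ℝ E]

def SatisfiesArmijo (f : E → ℝ) (f' : E → E) (α : ℝ) (x v : E) (η : ℝ) : Prop :=
  f (x + η • v) ≤ f x + α * η * ⟪f' x, v⟫

variable [CompleteSpace E] {f : E → ℝ} {f' : E → E} {L : ℝ≥0}

theorem satisfiesArmijo_of_mul_le (hf : ∀ y, HasGradientAt f (f' y) y)
    (hlip : LipschitzWith L f') {α η : ℝ} (hη : 0 ≤ η) (x v : E)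
    (hstep : η * L * ‖v‖ ^ 2 ≤ 2 * (1 - α) * -⟪f' x, v⟫) :
    SatisfiesArmijo f f' α x v η := by
  have hdescent := le_add_inner_add_sq_of_lipschitzWith_gradient hf hlip x (η • v)
  rw [real_inner_smul_right, norm_smul, Real.norm_eq_abs, mul_pow, sq_abs] at hdescent
  unfold SatisfiesArmijo
  nlinarith [mul_le_mul_of_nonneg_left hstep hη]

theorem satisfiesArmijo_of_le_of_gradientRelated (hf : ∀ y, HasGradientAt f (f' y) y)
    (hlip : LipschitzWith L f') {α μ M η : ℝ} (hα : α ≤ 1) (hη : 0 ≤ η) (x v : E)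
    (hdesc : μ * ‖f' x‖ ^ 2 ≤ -⟪f' x, v⟫) (hnorm : ‖v‖ ≤ M * ‖f' x‖)
    (hηle : η ≤ 2 * (1 - α) * μ / (L * M ^ 2 + 1)) :
    SatisfiesArmijo f f' α x v η := by
  refine satisfiesArmijo_of_mul_le hf hlip hη x v ?_
  have hη' : η * (L * M ^ 2 + 1) ≤ 2 * (1 - α) * μ := (le_div_iff₀ (by positivity)).1 hηle
  have hnorm_sq : ‖v‖ ^ 2 ≤ M ^ 2 * ‖f' x‖ ^ 2 := by
    rw [← mul_pow]; exact pow_le_pow_left₀ (norm_nonneg v) hnorm 2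
  calc η * L * ‖v‖ ^ 2 ≤ η * (L * M ^ 2 + 1) * ‖f' x‖ ^ 2 := by
        nlinarith [mul_le_mul_of_nonneg_left hnorm_sq (by positivity : (0 : ℝ) ≤ η * L)]
    _ ≤ 2 * (1 - α) * μ * ‖f' x‖ ^ 2 := by gcongr
    _ ≤ 2 * (1 - α) * -⟪f' x, v⟫ := by rw [mul_assoc]; gcongr

end Armijo

theorem min_le_pow_of_isLeast {P : ℕ → Prop} {σ τ : ℝ} (hσ : 0 ≤ σ)
    (hP : ∀ m, σ ^ m ≤ τ → P m) {s : ℕ} (hs : IsLeast {m | P m} s) :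
    min 1 (σ * τ) ≤ σ ^ s := by
  cases s with
  | zero => simp
  | succ m =>
    have hm : ¬ P m := fun h => by have := hs.2 h; omega
    have hτ : τ < σ ^ m := lt_of_not_ge fun h => hm (hP m h)
    calc min 1 (σ * τ) ≤ σ * τ := min_le_right _ _
      _ ≤ σ * σ ^ m := by gcongr
      _ = σ ^ (m + 1) := (pow_succ' σ m).symm

theorem IsCompact.exists_pos_mul_sq_le_inner {X E : Type*} [TopologicalSpace X]
    [NormedAddCommGroup E] [InnerProductSpace ℝ E] [FiniteDimensional ℝ E]
    {K : Set X} (hK : IsCompact K) {A : X → E →L[ℝ] E} (hA : ContinuousOn A K)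
    (hpos : ∀ y ∈ K, ∀ u ≠ 0, 0 < ⟪u, A y u⟫) :
    ∃ μ > 0, ∀ y ∈ K, ∀ u, μ * ‖u‖ ^ 2 ≤ ⟪u, A y u⟫ := by
  have hcont : ContinuousOn (fun p : X × E => ⟪p.2, A p.1 p.2⟫) (K ×ˢ Metric.sphere 0 1) :=
    continuousOn_snd.inner ((hA.comp continuousOn_fst fun _ hp => hp.1).clm_apply continuousOn_snd)
  obtain ⟨μ, hμ, hμle⟩ := (hK.prod (isCompact_sphere 0 1)).exists_forall_le' hcont
    fun p hp => hpos p.1 hp.1 p.2 (ne_zero_of_mem_unit_sphere ⟨p.2, hp.2⟩)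
  refine ⟨μ, hμ, fun y hy u => ?_⟩
  rcases eq_or_ne u 0 with rfl | hu
  · simp
  have hunit : ‖u‖⁻¹ • u ∈ Metric.sphere (0 : E) 1 := by
    simp [norm_smul, hu]
  calc μ * ‖u‖ ^ 2 ≤ ⟪‖u‖⁻¹ • u, A y (‖u‖⁻¹ • u)⟫ * ‖u‖ ^ 2 := by
        gcongr; exact hμle (y, _) ⟨hy, hunit⟩
    _ = ⟪u, A y u⟫ := by
        rw [map_smul, real_inner_smul_left, real_inner_smul_right]
        field_simp

section MatrixField

variable {n : Type*} [Fintype n] [DecidableEq n]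

theorem Matrix.continuous_toEuclideanCLM : Continuous (toEuclideanCLM (n := n) (𝕜 := ℝ)) :=
  LinearMap.continuous_of_finiteDimensional
    (toEuclideanCLM (n := n) (𝕜 := ℝ)).toAlgEquiv.toLinearMap

theorem Matrix.PosDef.inner_toEuclideanCLM_pos {A : Matrix n n ℝ} (hA : A.PosDef)
    {u : EuclideanSpace ℝ n} (hu : u ≠ 0) : 0 < ⟪u, toEuclideanCLM (𝕜 := ℝ) A u⟫ := by
  rw [inner_toEuclideanCLM]
  simpa using hA.dotProduct_mulVec_pos (x := WithLp.ofLp u) (by simpa using hu)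

theorem Matrix.PosDef.inner_toEuclideanCLM_nonneg {A : Matrix n n ℝ} (hA : A.PosDef)
    (u : EuclideanSpace ℝ n) : 0 ≤ ⟪u, toEuclideanCLM (𝕜 := ℝ) A u⟫ := by
  rcases eq_or_ne u 0 with rfl | hu
  · simp
  · exact (hA.inner_toEuclideanCLM_pos hu).le

theorem ContinuousOn.matrix_inv_of_det_ne_zero {X : Type*} [TopologicalSpace X]
    {H : X → Matrix n n ℝ} {K : Set X} (hH : ContinuousOn H K) (hdet : ∀ y ∈ K, (H y).det ≠ 0) :
    ContinuousOn (fun y => (H y)⁻¹) K := fun y hy =>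
  (continuousAt_matrix_inv _ (by rw [Ring.inverse_eq_inv']; exact continuousAt_inv₀ (hdet y hy)))
    |>.comp_continuousWithinAt (hH y hy)

theorem IsCompact.exists_uniform_bounds_toEuclideanCLM_inv {X : Type*} [TopologicalSpace X]
    {H : X → Matrix n n ℝ} {K : Set X} (hK : IsCompact K) (hH : ContinuousOn H K)
    (hpd : ∀ y ∈ K, (H y).PosDef) :
    ∃ μ > 0, ∃ M, ∀ y ∈ K, ∀ u, μ * ‖u‖ ^ 2 ≤ ⟪u, toEuclideanCLM (𝕜 := ℝ) (H y)⁻¹ u⟫ ∧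
      ‖toEuclideanCLM (𝕜 := ℝ) (H y)⁻¹ u‖ ≤ M * ‖u‖ := by
  have hA : ContinuousOn (fun y => toEuclideanCLM (𝕜 := ℝ) (H y)⁻¹) K :=
    continuous_toEuclideanCLM.comp_continuousOn
      (hH.matrix_inv_of_det_ne_zero fun y hy => (hpd y hy).det_pos.ne')
  obtain ⟨μ, hμ, hμle⟩ := hK.exists_pos_mul_sq_le_inner hA
    fun y hy _ hu => (hpd y hy).inv.inner_toEuclideanCLM_pos hu
  obtain ⟨M, hM⟩ := hK.exists_bound_of_continuousOn hA
  exact ⟨μ, hμ, M, fun y hy u => ⟨hμle y hy u, ContinuousLinearMap.le_of_opNorm_le _ (hM y hy) u⟩⟩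

end MatrixField

/-- For the Armijo-safeguarded quasi-Newton iteration
`x_{k+1} = x_k + σ^{s_k} v_k`, `v_k = −H(x_k)⁻¹∇f(x_k)`, with `f` coercive and Lipschitz
differentiable and `H` a continuous field of symmetric positive definite matrices, there is a
constant `c > 0` with `f(x_k) − f(x_{k+1}) ≥ c‖∇f(x_k)‖²` for every `k`. -/
theorem sufficient_decrease_of_armijo {n : ℕ}
    (f : EuclideanSpace ℝ (Fin n) → ℝ)
    (f' : EuclideanSpace ℝ (Fin n) → EuclideanSpace ℝ (Fin n))
    (hf : ∀ x, HasGradientAt f (f' x) x)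
    (L : NNReal) (hlip : LipschitzWith L f')
    (hcoercive : ∀ t : ℝ, IsCompact {x : EuclideanSpace ℝ (Fin n) | f x ≤ t})
    (H : EuclideanSpace ℝ (Fin n) → Matrix (Fin n) (Fin n) ℝ)
    (hHcont : Continuous H) (hHpd : ∀ x, (H x).PosDef)
    (α : ℝ) (hα : α ∈ Set.Ioo (0:ℝ) 1)
    (σ : ℝ) (hσ : σ ∈ Set.Ioo (0:ℝ) 1)
    (x₀ : EuclideanSpace ℝ (Fin n))
    (x v : ℕ → EuclideanSpace ℝ (Fin n)) (s : ℕ → ℕ)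
    (hx0 : x 0 = x₀)
    (hv : ∀ k, ∀ i, v k i = -((H (x k))⁻¹.mulVec (fun j => f' (x k) j) i))
    (hs : ∀ k, IsLeast {m : ℕ |
      f (x k + σ^m • v k) ≤ f (x k) + α * σ^m * ⟪f' (x k), v k⟫} (s k))
    (hrec : ∀ k, x (k + 1) = x k + σ^(s k) • v k) :
    ∃ c > 0, ∀ k, f (x k) - f (x (k + 1)) ≥ c * ‖f' (x k)‖^2 := by
  obtain ⟨hα0, hα1⟩ := hα
  have hσ0 : 0 < σ := hσ.1
  have hvH : ∀ k, v k = -toEuclideanCLM (𝕜 := ℝ) (H (x k))⁻¹ (f' (x k)) :=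
    fun k => by ext i; simp [hv]
  have harmijo : ∀ k, f (x (k + 1)) ≤ f (x k) + α * σ ^ s k * ⟪f' (x k), v k⟫ :=
    fun k => hrec k ▸ (hs k).1
  have hdecr : ∀ k, f (x (k + 1)) ≤ f (x k) := fun k => by
    have hinner : ⟪f' (x k), v k⟫ ≤ 0 := by
      rw [hvH, inner_neg_right, neg_nonpos]; exact (hHpd _).inv.inner_toEuclideanCLM_nonneg _
    linarith [harmijo k, mul_nonpos_of_nonneg_of_nonpos (by positivity : 0 ≤ α * σ ^ s k) hinner]
  have hsub : ∀ k, f (x k) ≤ f x₀ := fun k =>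
    hx0 ▸ antitone_nat_of_succ_le (f := f ∘ x) hdecr (Nat.zero_le k)
  obtain ⟨μ, hμ, M, hbounds⟩ := (hcoercive (f x₀)).exists_uniform_bounds_toEuclideanCLM_inv
    hHcont.continuousOn fun y _ => hHpd y
  set τ := 2 * (1 - α) * μ / (L * M ^ 2 + 1)
  have hτ : 0 < τ := div_pos (by nlinarith) (by positivity)
  refine ⟨α * min 1 (σ * τ) * μ, by positivity, fun k => ?_⟩
  have hdesc : μ * ‖f' (x k)‖ ^ 2 ≤ -⟪f' (x k), v k⟫ := by
    rw [hvH, inner_neg_right, neg_neg]; exact (hbounds _ (hsub k) _).1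
  have hnorm : ‖v k‖ ≤ M * ‖f' (x k)‖ := by
    rw [hvH, norm_neg]; exact (hbounds _ (hsub k) _).2
  have hstep : min 1 (σ * τ) ≤ σ ^ s k := min_le_pow_of_isLeast hσ0.le
    (fun m hm => satisfiesArmijo_of_le_of_gradientRelated hf hlip hα1.le (by positivity) _ _
      hdesc hnorm hm) (hs k)
  calc α * min 1 (σ * τ) * μ * ‖f' (x k)‖ ^ 2 ≤ α * σ ^ s k * (μ * ‖f' (x k)‖ ^ 2) := by
        rw [mul_assoc _ μ]; gcongr
    _ ≤ α * σ ^ s k * -⟪f' (x k), v k⟫ := by gcongr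
    _ ≤ f (x k) - f (x (k + 1)) := by linarith [harmijo k]
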